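/- arXiv:2305.01187 — 2 statements merged into one kernel-verified Lean document; each statement's English description precedes it below -/
import Mathlib

section
/- Let A be a commutative algebra object in a braided monoidal category C that contains the monoidal unit 1 as a direct summand, A ≅ 1 ⊕ A'. If a short exact sequence 0 → X → Y → Z → 0 in C becomes split after applying the induction functor F_A : C → Rep A (given on objects by M ↦ (A ⊗ M, μ ⊗ Id_M)), then the original sequence splits in C. -/
open CategoryTheory MonoidalCategory Limits

section Induction

variable {C : Type*} [Category C] [MonoidalCategory C]

/-- The induced (free) module `A ⊗ M` over a monoid object `A` (the induction functor
on objects): `F_A(M) = (A ⊗ M, μ ⊗ Id_M)`. -/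
@[simps]
def inducedMod (A : Mon C) (M : C) : Mod C A.X where
  X := A.X ⊗ M
  mod :=
  { smul := (α_ A.X A.X M).inv ≫ (MonObj.mul (X := A.X) ▷ M)
    one_smul := by
      change MonObj.one ▷ (A.X ⊗ M) ≫ (α_ A.X A.X M).inv ≫ (MonObj.mul (X := A.X) ▷ M) =
        (λ_ (A.X ⊗ M)).hom
      rw [associator_inv_naturality_left_assoc, ← comp_whiskerRight, MonObj.one_mul]
      monoidal
    mul_smul := by
      change _ ▷ _ ≫ _ = (α_ _ _ _).hom ≫ _ ◁ _ ≫ _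
      rw [associator_inv_naturality_left_assoc, ← comp_whiskerRight, MonObj.mul_assoc]
      simp only [comp_whiskerRight, MonoidalCategory.whiskerLeft_comp, Category.assoc,
        associator_inv_naturality_middle_assoc]
      monoidal }

/-- The induction functor on morphisms: `F_A(f) = Id_A ⊗ f`. -/
@[simps]
def inducedHom (A : Mon C) {M N : C} (f : M ⟶ N) : inducedMod A M ⟶ inducedMod A N where
  hom := A.X ◁ f
  isModHom := ⟨by
    change ((α_ A.X A.X M).inv ≫ (MonObj.mul (X := A.X) ▷ M)) ≫ A.X ◁ f =
      A.X ◁ (A.X ◁ f) ≫ (α_ A.X A.X N).inv ≫ (MonObj.mul (X := A.X) ▷ N)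
    simp only [Category.assoc, ← whisker_exchange]
    simp⟩

end Induction

/-! Whiskering a retraction `𝟙_ C → A → 𝟙_ C` exhibits `f` as a retract of `A ◁ f` in the arrow
category, and split monomorphisms are stable under retracts. -/

namespace CategoryTheory

variable {C : Type*} [Category C]

def RetractArrow.splitMono {X Y Z W : C} {f : X ⟶ Y} {g : Z ⟶ W} (h : RetractArrow f g)
    (s : SplitMono g) : SplitMono f where
  retraction := h.i.right ≫ s.retraction ≫ h.r.left
  id := by rw [← h.i_w_assoc, s.id_assoc, h.retract_left]

namespace MonoidalCategory

variable [MonoidalCategory C]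

def retractArrowWhiskerLeft {A : C} (h : Retract (𝟙_ C) A) {X Y : C} (f : X ⟶ Y) :
    RetractArrow f (A ◁ f) :=
  (Iso.retract (Arrow.isoMk (λ_ X).symm (λ_ Y).symm)).trans
    (NatTrans.retractArrowApp ((tensoringRight C).map f) h)

end MonoidalCategory

end CategoryTheory

/-- If a short exact sequence `0 → X → Y → Z → 0` becomes split after applying the
induction functor `F_A` for a commutative algebra object `A` containing the monoidal
unit as a direct summand, then the original sequence splits. -/
theorem induction_strong_exact
    {C : Type*} [Category C] [MonoidalCategory C] [BraidedCategory C] [Abelian C]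
    [MonoidalPreadditive C]
    [∀ X : C, PreservesFiniteLimits (tensorLeft X)]
    [∀ X : C, PreservesFiniteColimits (tensorLeft X)]
    (A : CommMon C) (A' : C) (hA : Nonempty (A.X ≅ 𝟙_ C ⊞ A'))
    (S : ShortComplex C) (hS : S.ShortExact)
    (hsplit : ∃ h : inducedMod A.toMon S.X₂ ⟶ inducedMod A.toMon S.X₁,
      inducedHom A.toMon S.f ≫ h = 𝟙 (inducedMod A.toMon S.X₁)) :
    ∃ r : S.X₂ ⟶ S.X₁, S.f ≫ r = 𝟙 S.X₁ := by
  obtain ⟨h, hh⟩ := hsplit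
  obtain ⟨e⟩ := hA
  let unitRetract : Retract (𝟙_ C) A.X :=
    (⟨biprod.inl, biprod.fst, biprod.inl_fst⟩ : Retract (𝟙_ C) (𝟙_ C ⊞ A')).trans e.symm.retract
  let split : SplitMono (A.X ◁ S.f) := ⟨h.hom, congrArg Mod.Hom.hom hh⟩
  exact ⟨_, ((retractArrowWhiskerLeft unitRetract S.f).splitMono split).id⟩
end

section
/- Let C be a locally finite abelian category, M an object of C, and k ≥ 1. If f, g : soc_k(M) → M are any two monomorphisms, then Im(f) = Im(g) as subobjects of M, and consequently Coker(f) ≅ Coker(g). -/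
open CategoryTheory Limits

universe v v'

section Loewy

variable {C : Type*} [Category.{v} C] [Abelian C] [WellPowered.{v} C]

/-- An object is semisimple if every monomorphism into it splits. -/
def IsSemisimple (X : C) : Prop :=
  ∀ (Y : C) (i : Y ⟶ X), Mono i → ∃ r : X ⟶ Y, i ≫ r = 𝟙 Y

/-- A subobject is the socle if it is the largest semisimple subobject. -/
def IsSocle {X : C} (S : Subobject X) : Prop :=
  IsSemisimple (S : C) ∧ ∀ T : Subobject X, IsSemisimple (T : C) → T ≤ S

/-- A subobject is the radical if it is the smallest subobject with semisimple quotient. -/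
def IsRadicalSubobject {X : C} (R : Subobject X) : Prop :=
  IsSemisimple (cokernel R.arrow) ∧ ∀ T : Subobject X, IsSemisimple (cokernel T.arrow) → R ≤ T

/-- The socle series of `X`, relative to a choice `soc` of socle for every object:
`soc_0(X) = 0` and `soc_{k+1}(X)` is the preimage in `X` of the socle of `X/soc_k(X)`. -/
noncomputable def socSeries (soc : ∀ X : C, Subobject X) (X : C) : ℕ → Subobject X
  | 0 => ⊥
  | k + 1 => socSeries soc X k ⊔
      (Subobject.pullback (cokernel.π (socSeries soc X k).arrow)).obj
        (soc (cokernel (socSeries soc X k).arrow))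

lemma socSeries_monotone (soc : ∀ X : C, Subobject X) (X : C) :
    Monotone (socSeries soc X) :=
  monotone_nat_of_le_succ fun _ => le_sup_left

/-- The Loewy length of `X`: the length of its socle series. -/
noncomputable def socLoewyLength (soc : ∀ X : C, Subobject X) (X : C) : ℕ :=
  sInf {n | socSeries soc X n = ⊤}

/-- The radical series of `X`, relative to a choice `rad` of radical for every object:
`rad_0(X) = X` and `rad_{k+1}(X)` is the radical of `rad_k(X)`, viewed inside `X`. -/
noncomputable def radSeries (rad : ∀ X : C, Subobject X) (X : C) : ℕ → Subobject X
  | 0 => ⊤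
  | k + 1 => (Subobject.map (radSeries rad X k).arrow).obj
      (rad ((radSeries rad X k : C)))

/-- The Loewy length of `X`: the length of its radical series. -/
noncomputable def radLoewyLength (rad : ∀ X : C, Subobject X) (X : C) : ℕ :=
  sInf {n | radSeries rad X n = ⊥}

variable {D : Type*} [Category.{v'} D] [Abelian D] [WellPowered.{v'} D]

/-- A functor preserves socle filtrations if Loewy lengths agree and it sends each term of
the socle series of `X` to the corresponding term of the socle series of `F(X)`. -/
def PreservesSocleFiltrations (F : C ⥤ D) (socC : ∀ X : C, Subobject X)
    (socD : ∀ Y : D, Subobject Y) : Prop :=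
  ∀ X : C, socLoewyLength socC X = socLoewyLength socD (F.obj X) ∧
    ∀ k : ℕ, Nonempty (F.obj ((socSeries socC X k : C)) ≅ ((socSeries socD (F.obj X) k : D)))

/-- A functor preserves radical filtrations if Loewy lengths agree and it sends each term of
the radical series of `X` to the corresponding term of the radical series of `F(X)`. -/
def PreservesRadicalFiltrations (F : C ⥤ D) (radC : ∀ X : C, Subobject X)
    (radD : ∀ Y : D, Subobject Y) : Prop :=
  ∀ X : C, radLoewyLength radC X = radLoewyLength radD (F.obj X) ∧
    ∀ k : ℕ, Nonempty (F.obj ((radSeries radC X k : C)) ≅ ((radSeries radD (F.obj X) k : D)))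

end Loewy

open Subobject

/-!
Each step `A ↦ A ⊔ π⁻¹ (soc (X ⧸ A))` of the socle series commutes with pulling back along a
monomorphism `T ↪ M`: the induced map `T ⧸ (T ⊓ A) → M ⧸ A` is again a monomorphism, and the
preimage of a socle under a monomorphism is the socle. Hence `soc_n T = T ⊓ soc_n M` whenever
`soc_n M ≤ T`, and `T = soc_n M` shows that `soc_n (soc_n M)` is all of `soc_n M`. As every
morphism maps `soc_n X` into `soc_n Y`, a mono `f : soc_n M ⟶ M` has image inside `soc_n M`; this
image is isomorphic to `soc_n M`, and in a Hom-finite category a subobject isomorphic to a larger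
one is equal to it.
-/

section HomFinite

variable (k : Type*) [Field k] {C : Type*} [Category.{v} C] [Preadditive C] [Linear k C]

lemma isIso_of_mono_endo {B : C} [FiniteDimensional k (B ⟶ B)] (h : B ⟶ B) [Mono h] :
    IsIso h := by
  have hinj : Function.Injective (Linear.rightComp k B h) :=
    fun _ _ e => (cancel_mono h).1 e
  obtain ⟨r, hr⟩ := LinearMap.injective_iff_surjective.1 hinj (𝟙 B)
  have : IsSplitEpi h := IsSplitEpi.mk' ⟨r, hr⟩
  exact isIso_of_mono_of_isSplitEpi h

lemma CategoryTheory.Subobject.eq_of_le_of_iso {X : C} {A B : Subobject X}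
    [FiniteDimensional k ((B : C) ⟶ B)] (hle : A ≤ B) (e : (A : C) ≅ B) : A = B := by
  have : IsIso (e.inv ≫ ofLE A B hle) := isIso_of_mono_endo k _
  have : IsIso (ofLE A B hle) := by
    simpa using (inferInstance : IsIso (e.hom ≫ e.inv ≫ ofLE A B hle))
  exact eq_of_comm (asIso (ofLE A B hle)) (ofLE_arrow hle)

end HomFinite

section Socle

variable {C : Type*} [Category.{v} C]

lemma IsSemisimple.of_mono {X Y : C} (i : Y ⟶ X) [Mono i] (hX : IsSemisimple X) :
    IsSemisimple Y := fun Z j _ => by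
  obtain ⟨r, hr⟩ := hX Z (j ≫ i) inferInstance
  exact ⟨i ≫ r, by simpa using hr⟩

variable [Abelian C]

/-- With `r` a retraction of `kernel.ι e`, the map `𝟙 - r ≫ kernel.ι e` kills the kernel, so it
descends along `e` to a section of `e`: `Q` is a retract of `X`. -/
lemma IsSemisimple.of_epi {X Q : C} (e : X ⟶ Q) [Epi e] (hX : IsSemisimple X) :
    IsSemisimple Q := by
  obtain ⟨r, hr⟩ := hX _ (kernel.ι e) inferInstance
  have hκ : kernel.ι e ≫ (𝟙 X - r ≫ kernel.ι e) = 0 := by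
    simp [Preadditive.comp_sub, reassoc_of% hr]
  let t : Q ⟶ X := Abelian.epiDesc e (𝟙 X - r ≫ kernel.ι e) hκ
  have ht : t ≫ e = 𝟙 Q := by
    rw [← cancel_epi e, ← Category.assoc, Abelian.comp_epiDesc]
    simp [Preadditive.sub_comp]
  have : IsSplitMono t := IsSplitMono.mk' ⟨e, ht⟩
  exact hX.of_mono t

lemma IsSocle.le_pullback {Y Z : C} {U : Subobject Z} (hU : IsSocle U) (φ : Y ⟶ Z)
    {S : Subobject Y} (hS : IsSemisimple (S : C)) : S ≤ (Subobject.pullback φ).obj U := by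
  have himage : imageSubobject (S.arrow ≫ φ) ≤ U :=
    hU.2 _ (hS.of_epi (factorThruImageSubobject _))
  refine le_of_factors ((pullback_factors_iff φ U S.arrow).2 ?_)
  exact factors_of_le _ himage
    (by simpa using imageSubobject_factors_comp_self (S.arrow ≫ φ) (𝟙 _))

lemma IsSocle.pullback_le {Y Z : C} {U : Subobject Y} (hU : IsSocle U) (ψ : Y ⟶ Z) [Mono ψ]
    {S : Subobject Z} (hS : IsSemisimple (S : C)) : (Subobject.pullback ψ).obj S ≤ U :=
  have : Mono (pullbackπ ψ S) := mono_of_mono_fac (isPullback ψ S).w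
  hU.2 _ (hS.of_mono (pullbackπ ψ S))

noncomputable def preimageSocle (soc : ∀ X : C, Subobject X) {X : C} (A : Subobject X) :
    Subobject X :=
  (Subobject.pullback (cokernel.π A.arrow)).obj (soc (cokernel A.arrow))

lemma socSeries_succ (soc : ∀ X : C, Subobject X) (X : C) (n : ℕ) :
    socSeries soc X (n + 1) = socSeries soc X n ⊔ preimageSocle soc (socSeries soc X n) :=
  rfl

lemma pullback_cokernel_π_pullback_cokernel_map {X Y : C} (f : X ⟶ Y) {A : Subobject X}
    {B : Subobject Y} (l : (A : C) ⟶ B) (w : A.arrow ≫ f = l ≫ B.arrow)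
    (P : Subobject (cokernel B.arrow)) :
    (Subobject.pullback (cokernel.π A.arrow)).obj
        ((Subobject.pullback (cokernel.map A.arrow B.arrow l f w)).obj P) =
      (Subobject.pullback f).obj ((Subobject.pullback (cokernel.π B.arrow)).obj P) := by
  rw [← pullback_comp, ← pullback_comp, cokernel.π_desc]

variable {soc : ∀ X : C, Subobject X}

lemma preimageSocle_le_pullback (hsoc : ∀ X : C, IsSocle (soc X)) {X Y : C} (f : X ⟶ Y)
    {A : Subobject X} {B : Subobject Y} (h : A ≤ (Subobject.pullback f).obj B) :
    preimageSocle soc A ≤ (Subobject.pullback f).obj (preimageSocle soc B) := by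
  have w : A.arrow ≫ f = (ofLE A _ h ≫ pullbackπ f B) ≫ B.arrow := by
    simp [(isPullback f B).w]
  rw [preimageSocle, preimageSocle, ← pullback_cokernel_π_pullback_cokernel_map f _ w]
  exact (Subobject.pullback _).monotone ((hsoc _).le_pullback _ (hsoc _).1)

lemma pullback_preimageSocle_le (hsoc : ∀ X : C, IsSocle (soc X)) {X Y : C} (f : X ⟶ Y) [Mono f]
    (B : Subobject Y) :
    (Subobject.pullback f).obj (preimageSocle soc B) ≤
      preimageSocle soc ((Subobject.pullback f).obj B) := by
  have := Abelian.mono_cokernel_map_of_isPullback (isPullback f B).flip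
  rw [preimageSocle, preimageSocle,
    ← pullback_cokernel_π_pullback_cokernel_map f _ (isPullback f B).flip.w]
  exact (Subobject.pullback _).monotone ((hsoc _).pullback_le _ (hsoc _).1)

lemma pullback_preimageSocle (hsoc : ∀ X : C, IsSocle (soc X)) {X Y : C} (f : X ⟶ Y) [Mono f]
    (B : Subobject Y) :
    (Subobject.pullback f).obj (preimageSocle soc B) =
      preimageSocle soc ((Subobject.pullback f).obj B) :=
  (pullback_preimageSocle_le hsoc f B).antisymm (preimageSocle_le_pullback hsoc f le_rfl)

lemma socSeries_le_pullback (hsoc : ∀ X : C, IsSocle (soc X)) {X Y : C} (f : X ⟶ Y) (n : ℕ) :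
    socSeries soc X n ≤ (Subobject.pullback f).obj (socSeries soc Y n) := by
  induction n with
  | zero => exact bot_le
  | succ n ih =>
    rw [socSeries_succ, socSeries_succ]
    exact sup_le (ih.trans ((Subobject.pullback f).monotone le_sup_left))
      ((preimageSocle_le_pullback hsoc f ih).trans ((Subobject.pullback f).monotone le_sup_right))

lemma CategoryTheory.Subobject.pullback_arrow_sup_of_le {X : C} {T S S' : Subobject X}
    (hS : S ≤ T) (hS' : S' ≤ T) :
    (Subobject.pullback T.arrow).obj (S ⊔ S') =
      (Subobject.pullback T.arrow).obj S ⊔ (Subobject.pullback T.arrow).obj S' := by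
  have map_pullback_of_le : ∀ {R}, R ≤ T →
      (Subobject.map T.arrow).obj ((Subobject.pullback T.arrow).obj R) = R := fun hR => by
    rw [← inf_eq_map_pullback, inf_eq_right.2 hR]
  conv_lhs => rw [← map_pullback_of_le hS, ← map_pullback_of_le hS',
    ← (mapPullbackAdj T.arrow).gc.l_sup, pullback_map_self]

lemma pullback_socSeries_of_le (hsoc : ∀ X : C, IsSocle (soc X)) {X : C} (T : Subobject X) :
    ∀ n, socSeries soc X n ≤ T →
      (Subobject.pullback T.arrow).obj (socSeries soc X n) = socSeries soc (T : C) n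
  | 0, _ => show (Subobject.pullback T.arrow).obj ⊥ = ⊥ by
    simpa only [Subobject.map_bot] using pullback_map_self T.arrow ⊥
  | n + 1, h => by
    obtain ⟨hn, hpre⟩ : _ ∧ preimageSocle soc (socSeries soc X n) ≤ T := sup_le_iff.1 h
    rw [socSeries_succ, socSeries_succ, pullback_arrow_sup_of_le hn hpre,
      pullback_preimageSocle hsoc, pullback_socSeries_of_le hsoc T n hn]

lemma socSeries_socSeries_eq_top (hsoc : ∀ X : C, IsSocle (soc X)) (X : C) (n : ℕ) :
    socSeries soc (socSeries soc X n : C) n = ⊤ := by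
  rw [← pullback_socSeries_of_le hsoc _ n le_rfl]
  simpa using pullback_self (socSeries soc X n).arrow

lemma mk_le_socSeries_of_mono (hsoc : ∀ X : C, IsSocle (soc X)) {X : C} {n : ℕ}
    (f : (socSeries soc X n : C) ⟶ X) [Mono f] : Subobject.mk f ≤ socSeries soc X n := by
  rw [← map_top f, (mapPullbackAdj f).gc]
  simpa only [socSeries_socSeries_eq_top hsoc] using socSeries_le_pullback hsoc f n

end Socle

/-- The terms of the socle series are uniquely embedded: any two monomorphisms
`soc_k(M) → M` have the same image, and hence isomorphic cokernels. -/
theorem socSeries_uniquely_embedded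
    {k : Type*} [Field k] {C : Type*} [Category.{v} C] [Abelian C] [WellPowered.{v} C]
    [CategoryTheory.Linear k C] [∀ X Y : C, FiniteDimensional k (X ⟶ Y)]
    [∀ X : C, IsNoetherianObject X] [∀ X : C, IsArtinianObject X]
    (soc : ∀ X : C, Subobject X) (hsoc : ∀ X : C, IsSocle (soc X))
    (M : C) (n : ℕ) (hn : 1 ≤ n)
    (f g : ((socSeries soc M n : C)) ⟶ M) (hf : Mono f) (hg : Mono g) :
    Subobject.mk f = Subobject.mk g ∧ Nonempty (cokernel f ≅ cokernel g) := by
  have mk_eq (i : (socSeries soc M n : C) ⟶ M) [Mono i] : Subobject.mk i = socSeries soc M n :=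
    Subobject.eq_of_le_of_iso k (mk_le_socSeries_of_mono hsoc i) (underlyingIso i)
  have hfg : Subobject.mk f = Subobject.mk g := (mk_eq f).trans (mk_eq g).symm
  exact ⟨hfg, ⟨cokernelIsoOfEq (by simp) ≪≫ cokernelEpiComp (isoOfMkEqMk f g hfg).hom g⟩⟩
end
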